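/- arXiv:1308.5268 — 2 statements merged into one kernel-verified Lean document; each statement's English description precedes it below -/
import Mathlib

section
/- Let r, d ∈ ℕ and let 0 ≤ k_1 < k_2 < … < k_d = r be integers. Let a function x ∈ L^{r,r}_{∞,∞}(ℝ₋) and a spline φ ∈ Φ_{r,d−2} satisfy ‖x^{(k_i)}‖ = ‖φ^{(k_i)}‖ for i = 2,…,d. Then ‖x^{(k_1)}‖ ≥ ‖φ^{(k_1)}‖, and equality holds only if x^{(k_1)} ≡ φ^{(k_1)} on ℝ₋. -/
open Set

/-- The "norm" of the k-th derivative of `x` on the half-line `ℝ₋ = (-∞,0]`: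
for `k < r` it is the (essential) sup of `|x^{(k)}|` on `ℝ₋` (derivatives taken within `ℝ₋`);
for `k = r` it is the least Lipschitz constant of `x^{(r-1)}` on `ℝ₋`, which equals the
essential sup norm of the a.e. derivative `x^{(r)}`. -/
noncomputable def nrm (r k : ℕ) (x : ℝ → ℝ) : ℝ :=
  if k = r then
    sInf {L : ℝ | 0 ≤ L ∧ LipschitzOnWith (Real.toNNReal L)
      (iteratedDerivWithin (r - 1) x (Set.Iic 0)) (Set.Iic 0)}
  else
    sSup ((fun t => |iteratedDerivWithin k x (Set.Iic 0) t|) '' Set.Iic 0)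

/-- The class `L^{r,r}_{∞,∞}(ℝ₋)` of `r`-monotone functions: `x` has derivatives up to order
`r-1` on `ℝ₋`, `x^{(r-1)}` is Lipschitz on `ℝ₋` (equivalently, it is locally absolutely
continuous with essentially bounded a.e. derivative `x^{(r)}`), `x` is bounded,
`x^{(k)} ≥ 0` on `ℝ₋` for `k = 0,…,r-1`, and `x^{(r)} ≥ 0` a.e.
(equivalently, `x^{(r-1)}` is nondecreasing on `ℝ₋`). -/
def MemLrr (r : ℕ) (x : ℝ → ℝ) : Prop :=
  ContDiffOn ℝ (r - 1 : ℕ) x (Set.Iic 0) ∧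
  (∃ L : NNReal, LipschitzOnWith L (iteratedDerivWithin (r - 1) x (Set.Iic 0)) (Set.Iic 0)) ∧
  BddAbove ((fun t => |x t|) '' Set.Iic 0) ∧
  (∀ k, k < r → ∀ t ∈ Set.Iic (0 : ℝ), 0 ≤ iteratedDerivWithin k x (Set.Iic 0) t) ∧
  MonotoneOn (iteratedDerivWithin (r - 1) x (Set.Iic 0)) (Set.Iic 0)

/-- The spline `φ(a_1,…,a_s,l;t) = (l/r!) ∑_{j=1}^s (-1)^{j+1} (t+a_j)_+^r`
(here `a` is 0-indexed: `a 0 = a_1`, …, `a (s-1) = a_s`). -/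
noncomputable def splineFun (r s : ℕ) (a : ℕ → ℝ) (l : ℝ) : ℝ → ℝ :=
  fun t => (l / (Nat.factorial r : ℝ)) *
    ∑ j ∈ Finset.range s, (-1 : ℝ) ^ j * (max (t + a j) 0) ^ r

/-- `φ ∈ Φ_{r,n}`: `φ` is a spline of order `r` with `s` knots, `1 ≤ s ≤ n`,
`a_1 > a_2 > … > a_s > 0` and `l > 0`. -/
def IsSpline (r n : ℕ) (φ : ℝ → ℝ) : Prop :=
  ∃ s : ℕ, 1 ≤ s ∧ s ≤ n ∧
    ∃ (a : ℕ → ℝ) (l : ℝ),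
      (∀ i j, i < j → j < s → a j < a i) ∧ (∀ j, j < s → 0 < a j) ∧ 0 < l ∧
      φ = splineFun r s a l

/-- The tuple `(M_{k_lo},…,M_{k_d})` of positive numbers is admissible for
`L^{r,r}_{∞,∞}(ℝ₋)` and the orders `k_lo < … < k_d`. -/
def Admissible (r d lo : ℕ) (k : ℕ → ℕ) (M : ℕ → ℝ) : Prop :=
  ∃ x : ℝ → ℝ, MemLrr r x ∧ ∀ i, lo ≤ i → i ≤ d → nrm r (k i) x = M i

/-- Type 1 admissible set (for the tuple of orders `k_lo,…,k_d`, of length `d-lo+1`):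
some spline in `Φ_{r,d-lo} \ Φ_{r,d-lo-1}` realizes the prescribed norms. -/
def Type1 (r d lo : ℕ) (k : ℕ → ℕ) (M : ℕ → ℝ) : Prop :=
  Admissible r d lo k M ∧
  ∃ φ : ℝ → ℝ, IsSpline r (d - lo) φ ∧ ¬ IsSpline r (d - lo - 1) φ ∧
    ∀ i, lo ≤ i → i ≤ d → nrm r (k i) φ = M i

/-- Type 2 admissible set: some spline in `Φ_{r,d-lo-1}` realizes the prescribed norms. -/
def Type2 (r d lo : ℕ) (k : ℕ → ℕ) (M : ℕ → ℝ) : Prop :=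
  Admissible r d lo k M ∧
  ∃ φ : ℝ → ℝ, IsSpline r (d - lo - 1) φ ∧
    ∀ i, lo ≤ i → i ≤ d → nrm r (k i) φ = M i

/-- Type 3 admissible set: `k_lo = 0`, the set is not of Type 1, and some spline
`φ ∈ Φ_{r,d-lo}` plus a constant `C > 0` realizes the prescribed norms. -/
def Type3 (r d lo : ℕ) (k : ℕ → ℕ) (M : ℕ → ℝ) : Prop :=
  Admissible r d lo k M ∧ k lo = 0 ∧ ¬ Type1 r d lo k M ∧
  ∃ (φ : ℝ → ℝ) (C : ℝ), IsSpline r (d - lo) φ ∧ 0 < C ∧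
    ∀ i, lo ≤ i → i ≤ d → nrm r (k i) (fun t => φ t + C) = M i

/-!
Put `D m = x^{(m)} - φ^{(m)}` on `ℝ₋` for `m < r`. Left of the first knot `φ` vanishes, so
`D m ≥ 0` there. On the `s` knot intervals `φ^{(r-1)}` has slopes `l, 0, l, …`, while
`x^{(r-1)}` is nondecreasing and, as `‖x^{(r)}‖ = l`, `l`-Lipschitz; so `D (r-1)` is monotone on
each interval, in alternating directions, and takes at most `s` values of alternating signs
starting with a negative one (at most `s - 1` if `D (r-1) 0 = 0`). By Rolle's theorem such an
alternation of `D m` passes to `D (m+1)`, and gains one value when `D m 0 = 0`.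

For `k < r` both norms are values at `0` of nonnegative nondecreasing functions, so the
hypotheses say `D (k i) 0 = 0` for the `d - 2 ≥ s` indices `2 ≤ i ≤ d - 1`. Hence no `D m` with
`m ≤ k 2` takes a negative value. At `t = 0` this is the inequality; in the equality case
`D (k 1)` is nondecreasing (as `D (k 1 + 1) ≥ 0`) and vanishes at `0`, hence on all of `ℝ₋`.
-/
open Topology

def HasSignAlternation (f : ℝ → ℝ) (n : ℕ) : Prop :=
  ∃ t : ℕ → ℝ, (∀ i, i + 1 < n → t i < t (i + 1)) ∧ (∀ i < n, t i ≤ 0) ∧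
    ∀ i < n, (-1) ^ i * f (t i) < 0

section Rolle

variable {f g : ℝ → ℝ}

theorem hasSignAlternation_of_increments (hf : ContinuousOn f (Iic 0))
    (hf' : ∀ t < 0, HasDerivAt f (g t) t) {n : ℕ} {u : ℕ → ℝ}
    (hu : ∀ i < n, u i < u (i + 1)) (hu₀ : ∀ i ≤ n, u i ≤ 0)
    (hsign : ∀ i < n, (-1) ^ i * (f (u (i + 1)) - f (u i)) < 0) :
    HasSignAlternation g n := by
  have hmvt : ∀ i < n, ∃ c ∈ Ioo (u i) (u (i + 1)), (-1) ^ i * g c < 0 := by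
    intro i hi
    have hle : u (i + 1) ≤ 0 := hu₀ _ hi
    obtain ⟨c, hc, hgc⟩ := exists_hasDerivAt_eq_slope f g (hu i hi)
      (hf.mono (Icc_subset_Iic_self.trans (Iic_subset_Iic.2 hle)))
      (fun c hc => hf' c (hc.2.trans_le hle))
    refine ⟨c, hc, ?_⟩
    rw [hgc, ← mul_div_assoc]
    exact div_neg_of_neg_of_pos (hsign i hi) (sub_pos.2 (hu i hi))
  choose! c hc hgc using hmvt
  exact ⟨c, fun i hi => (hc i (by omega)).2.trans (hc (i + 1) hi).1,
    fun i hi => (hc i hi).2.le.trans (hu₀ _ hi), hgc⟩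

/-- Prepending a point far to the left, where `f ≥ 0`, turns `n` alternating values into `n`
alternating increments. -/
theorem HasSignAlternation.exists_increments {c : ℝ} (hleft : ∀ t ≤ c, 0 ≤ f t) {n : ℕ}
    (h : HasSignAlternation f n) :
    ∃ u : ℕ → ℝ, (∀ i < n, u i < u (i + 1)) ∧ (∀ i ≤ n, u i ≤ 0) ∧
      (∀ i < n, (-1) ^ i * (f (u (i + 1)) - f (u i)) < 0) ∧ (0 < n → 0 < (-1) ^ n * f (u n)) := by
  obtain ⟨t, ht, ht₀, hsign⟩ := h
  rcases Nat.eq_zero_or_pos n with rfl | hn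
  · exact ⟨fun _ => 0, by simp, by simp, by simp, by simp⟩
  set w := min c (t 0) - 1
  have hw : w < t 0 := (sub_one_lt _).trans_le (min_le_right _ _)
  have hfw : 0 ≤ f w := hleft w ((sub_one_lt _).le.trans (min_le_left _ _))
  refine ⟨fun | 0 => w | j + 1 => t j, ?_, ?_, ?_, fun _ => ?_⟩
  · rintro (_ | i) hi
    · exact hw
    · exact ht i hi
  · rintro (_ | i) hi
    · exact hw.le.trans (ht₀ 0 hn)
    · exact ht₀ i hi
  · rintro (_ | i) hi
    · have := hsign 0 hn
      simp only [pow_zero, one_mul] at this ⊢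
      linarith
    · have h₁ := hsign (i + 1) hi
      rw [pow_succ] at h₁ ⊢
      linear_combination h₁ + hsign i (by omega)
  · obtain ⟨m, rfl⟩ : ∃ m, n = m + 1 := ⟨n - 1, by omega⟩
    rw [pow_succ]
    linarith [hsign m (by omega)]

theorem HasSignAlternation.deriv (hf : ContinuousOn f (Iic 0))
    (hf' : ∀ t < 0, HasDerivAt f (g t) t) {c : ℝ} (hleft : ∀ t ≤ c, 0 ≤ f t) {n : ℕ}
    (h : HasSignAlternation f n) : HasSignAlternation g n :=
  let ⟨_, hu, hu₀, hsign, _⟩ := h.exists_increments hleft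
  hasSignAlternation_of_increments hf hf' hu hu₀ hsign

theorem HasSignAlternation.deriv_of_eq_zero (hf : ContinuousOn f (Iic 0))
    (hf' : ∀ t < 0, HasDerivAt f (g t) t) {c : ℝ} (hleft : ∀ t ≤ c, 0 ≤ f t) {n : ℕ}
    (h : HasSignAlternation f n) (hn : 0 < n) (h₀ : f 0 = 0) :
    HasSignAlternation g (n + 1) := by
  obtain ⟨u, hu, hu₀, hsign, hlast⟩ := h.exists_increments hleft
  have hlast := hlast hn
  have hun : u n < 0 := (hu₀ n le_rfl).lt_of_ne (by rintro h; simp [h, h₀] at hlast)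
  refine hasSignAlternation_of_increments (u := Function.update u (n + 1) 0) hf hf' ?_ ?_ ?_
  · intro i hi
    rcases (Nat.lt_succ_iff.1 hi).lt_or_eq with hi | rfl
    · simpa [Function.update_of_ne (by omega : i ≠ n + 1),
        Function.update_of_ne (by omega : i + 1 ≠ n + 1)] using hu i hi
    · simpa [Function.update_of_ne (by omega : i ≠ i + 1)] using hun
  · intro i hi
    rcases hi.lt_or_eq with hi | rfl
    · simpa [Function.update_of_ne (by omega : i ≠ n + 1)] using hu₀ i (by omega)
    · simp
  · intro i hi
    rcases (Nat.lt_succ_iff.1 hi).lt_or_eq with hi | rfl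
    · simpa [Function.update_of_ne (by omega : i ≠ n + 1),
        Function.update_of_ne (by omega : i + 1 ≠ n + 1)] using hsign i hi
    · simp only [Function.update_self, h₀, Function.update_of_ne (by omega : i ≠ i + 1)]
      linarith

end Rolle

theorem HasSignAlternation.le_of_antitoneOn {f : ℝ → ℝ} {b : ℕ → ℝ} {s n : ℕ} (hbs : b s = 0)
    (hleft : ∀ t ≤ b 0, 0 ≤ f t)
    (hpiece : ∀ p < s, AntitoneOn (fun t => (-1) ^ p * f t) (Icc (b p) (b (p + 1))))
    (h : HasSignAlternation f n) : n ≤ s ∧ (f 0 = 0 → n ≤ s - 1) := by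
  obtain ⟨t, ht, ht₀, hsign⟩ := h
  have key : ∀ i < n, i < s ∧ b i < t i := by
    intro i
    induction i with
    | zero =>
      intro hn
      have hb : b 0 < t 0 := lt_of_not_ge fun hle => by
        linarith [hleft _ hle, hsign 0 hn, show (-1 : ℝ) ^ 0 = 1 from pow_zero _]
      refine ⟨Nat.pos_of_ne_zero fun hs => ?_, hb⟩
      subst hs
      linarith [ht₀ 0 hn]
    | succ i ih =>
      intro hi
      obtain ⟨his, hbt⟩ := ih (by omega)
      by_contra hcon
      have hle : t (i + 1) ≤ b (i + 1) := by
        rcases (show i + 1 ≤ s from his).lt_or_eq with hlt | heq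
        · exact not_lt.1 fun h => hcon ⟨hlt, h⟩
        · exact (ht₀ _ hi).trans_eq (by rw [heq, hbs])
      have hti := ht i hi
      have := hpiece i his ⟨hbt.le, hti.le.trans hle⟩ ⟨hbt.le.trans hti.le, hle⟩ hti.le
      have h₁ := hsign (i + 1) hi
      rw [pow_succ] at h₁
      linarith [hsign i (by omega)]
  rcases Nat.eq_zero_or_pos n with rfl | hn
  · simp
  obtain ⟨m, rfl⟩ : ∃ m, n = m + 1 := ⟨n - 1, by omega⟩
  obtain ⟨hms, hbt⟩ := key m (by omega)
  have htm : t m ≤ 0 := ht₀ m (by omega)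
  refine ⟨hms, fun h₀ => ?_⟩
  by_contra! hsm
  have hb : b (m + 1) = 0 := (show m + 1 = s by omega) ▸ hbs
  have := hpiece m hms ⟨hbt.le, htm.trans hb.ge⟩ ⟨hbt.le.trans htm, hb.ge⟩ htm
  simp only [h₀, mul_zero] at this
  linarith [hsign m (by omega)]

/-- The properties of the family `m ↦ x^{(m)} - φ^{(m)}`, `m ≤ q = r - 1`, that the counting
argument uses; `b` lists the knots of `φ` followed by `0`. -/
structure DerivChain (F : ℕ → ℝ → ℝ) (q : ℕ) (b : ℕ → ℝ) (s : ℕ) : Prop where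
  continuousOn : ∀ m ≤ q, ContinuousOn (F m) (Iic 0)
  hasDerivAt : ∀ m < q, ∀ t < 0, HasDerivAt (F m) (F (m + 1) t) t
  nonneg_left : ∀ m ≤ q, ∀ t ≤ b 0, 0 ≤ F m t
  knot_last : b s = 0
  antitoneOn : ∀ p < s, AntitoneOn (fun t => (-1) ^ p * F q t) (Icc (b p) (b (p + 1)))

namespace DerivChain

variable {F : ℕ → ℝ → ℝ} {q s : ℕ} {b : ℕ → ℝ}

theorem add_card_le (hF : DerivChain F q b s) {Z : Finset ℕ} {m n : ℕ} (hm : m ≤ q)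
    (hZ : ∀ z ∈ Z, m ≤ z ∧ z ≤ q ∧ F z 0 = 0) (h : HasSignAlternation (F m) n) (hn : 0 < n) :
    n + Z.card ≤ s := by
  induction hj : q - m generalizing m n Z with
  | zero =>
    obtain rfl : m = q := by omega
    have hbound := h.le_of_antitoneOn hF.knot_last (hF.nonneg_left m le_rfl) hF.antitoneOn
    have hZm : Z ⊆ {m} := fun z hz => Finset.mem_singleton.2 (by linarith [hZ z hz])
    rcases Finset.subset_singleton_iff.1 hZm with rfl | rfl
    · simpa using hbound.1
    · have := hbound.2 (hZ m (by simp)).2.2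
      rw [Finset.card_singleton]
      omega
  | succ j ih =>
    have hmq : m < q := by omega
    have hc := hF.continuousOn m hm
    have hd := hF.hasDerivAt m hmq
    have hl := hF.nonneg_left m hm
    by_cases hmZ : m ∈ Z
    · have := ih hmq (Z := Z.erase m)
        (fun z hz => ⟨(hZ z (Finset.mem_of_mem_erase hz)).1.lt_of_ne' (Finset.ne_of_mem_erase hz),
          (hZ z (Finset.mem_of_mem_erase hz)).2⟩)
        (h.deriv_of_eq_zero hc hd hl hn (hZ m hmZ).2.2) (by omega) (by omega)
      rw [Finset.card_erase_of_mem hmZ] at this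
      have := Finset.card_pos.2 ⟨m, hmZ⟩
      omega
    · exact ih hmq (fun z hz => ⟨(hZ z hz).1.lt_of_ne' (ne_of_mem_of_not_mem hz hmZ),
        (hZ z hz).2⟩) (h.deriv hc hd hl) hn (by omega)

theorem nonneg_of_strictMonoOn (hF : DerivChain F q b s) {k : ℕ → ℕ} {i₀ i₁ : ℕ}
    (hk : StrictMonoOn k (Icc i₀ i₁)) (hi : i₀ ≤ i₁) (hkq : k i₁ ≤ q)
    (hzero : ∀ i ∈ Icc i₀ i₁, F (k i) 0 = 0) (hs : s + i₀ ≤ i₁ + 1) {m : ℕ} (hm : m ≤ k i₀)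
    {t : ℝ} (ht : t ≤ 0) : 0 ≤ F m t := by
  have hkle : ∀ i ∈ Icc i₀ i₁, k i₀ ≤ k i ∧ k i ≤ k i₁ := fun i hi' =>
    ⟨hk.monotoneOn ⟨le_rfl, hi⟩ hi' hi'.1, hk.monotoneOn hi' ⟨hi, le_rfl⟩ hi'.2⟩
  have hZ : ∀ z ∈ (Finset.Icc i₀ i₁).image k, m ≤ z ∧ z ≤ q ∧ F z 0 = 0 := by
    simp only [Finset.mem_image, Finset.mem_Icc]
    rintro _ ⟨i, hi', rfl⟩
    exact ⟨hm.trans (hkle i hi').1, (hkle i hi').2.trans hkq, hzero i hi'⟩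
  by_contra! hneg
  have := hF.add_card_le (hm.trans ((hkle i₀ ⟨le_rfl, hi⟩).2.trans hkq)) hZ
    ⟨fun _ => t, by simp, by simpa, by simpa⟩ one_pos
  rw [Finset.card_image_of_injOn (by simpa using hk.injOn), Nat.card_Icc] at this
  omega

theorem monotoneOn (hF : DerivChain F q b s) {m : ℕ} (hm : m < q)
    (hnn : ∀ t < 0, 0 ≤ F (m + 1) t) : MonotoneOn (F m) (Iic 0) :=
  monotoneOn_of_hasDerivWithinAt_nonneg (convex_Iic 0) (hF.continuousOn m hm.le)
    (by simpa using fun t ht => (hF.hasDerivAt m hm t ht).hasDerivWithinAt) (by simpa using hnn)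

end DerivChain

theorem hasDerivAt_max_zero_pow {p : ℕ} (hp : 2 ≤ p) (u : ℝ) :
    HasDerivAt (fun u : ℝ => max u 0 ^ p) (p * max u 0 ^ (p - 1)) u := by
  have off : ∀ v ≠ 0, HasDerivAt (fun u : ℝ => max u 0 ^ p) (p * max v 0 ^ (p - 1)) v := by
    intro v hv
    rcases hv.lt_or_gt with hv | hv
    · have : (fun u : ℝ => max u 0 ^ p) =ᶠ[𝓝 v] fun _ => 0 := by
        filter_upwards [Iio_mem_nhds hv] with u (hu : u < 0)
        simp [max_eq_right hu.le, zero_pow (by omega : p ≠ 0)]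
      rw [max_eq_right hv.le, zero_pow (by omega : p - 1 ≠ 0), mul_zero]
      exact (hasDerivAt_const v 0).congr_of_eventuallyEq this
    · have : (fun u : ℝ => max u 0 ^ p) =ᶠ[𝓝 v] fun u => u ^ p := by
        filter_upwards [Ioi_mem_nhds hv] with u (hu : 0 < u)
        rw [max_eq_left hu.le]
      rw [max_eq_left hv.le]
      exact (hasDerivAt_pow p v).congr_of_eventuallyEq this
  rcases eq_or_ne u 0 with rfl | hu
  · exact hasDerivAt_of_hasDerivAt_of_ne off (by fun_prop) (by fun_prop)
  · exact off u hu

theorem max_zero_sub_max_zero_le_sub {u v : ℝ} (h : u ≤ v) : max v 0 - max u 0 ≤ v - u := by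
  simp only [max_def]; split_ifs <;> linarith

theorem max_zero_sub_max_zero_le {t₁ t₂ b c : ℝ} (ht : t₁ ≤ t₂) (hbc : b ≤ c) :
    max (t₂ + b) 0 - max (t₁ + b) 0 ≤ max (t₂ + c) 0 - max (t₁ + c) 0 := by
  simp only [max_def]; split_ifs <;> linarith

theorem sum_range_neg_one_pow_mul_mem_Icc {v : ℕ → ℝ} {s : ℕ}
    (hv : ∀ j, j + 1 < s → v (j + 1) ≤ v j) (hv₀ : ∀ j, 0 ≤ v j) :
    ∑ j ∈ Finset.range s, (-1) ^ j * v j ∈ Icc 0 (v 0) := by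
  induction s generalizing v with
  | zero => simpa using hv₀ 0
  | succ s ih =>
    obtain ⟨h₁, h₂⟩ := ih (v := fun j => v (j + 1)) (fun j hj => hv (j + 1) (by omega))
      (fun j => hv₀ _)
    have hsum : ∑ j ∈ Finset.range (s + 1), (-1) ^ j * v j
        = v 0 - ∑ j ∈ Finset.range s, (-1) ^ j * v (j + 1) := by
      simp [Finset.sum_range_succ', pow_succ, Finset.sum_neg_distrib, sub_eq_neg_add]
    rw [hsum]
    refine ⟨?_, by linarith⟩
    rcases Nat.eq_zero_or_pos s with rfl | hs
    · simpa using hv₀ 0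
    · linarith [hv 0 (by omega)]

/-- `φ^{(m)}` for `φ = splineFun r s a l` and `m < r`. -/
noncomputable def splineDeriv (r s : ℕ) (a : ℕ → ℝ) (l : ℝ) (m : ℕ) (t : ℝ) : ℝ :=
  l / (Nat.factorial (r - m) : ℝ) * ∑ j ∈ Finset.range s, (-1) ^ j * max (t + a j) 0 ^ (r - m)

/-- The knots `-a 0 < -a 1 < ⋯ < -a (s - 1)` followed by `0`. -/
noncomputable def knot (s : ℕ) (a : ℕ → ℝ) (p : ℕ) : ℝ := if p < s then -a p else 0

section Spline

variable {r s : ℕ} {a : ℕ → ℝ} {l : ℝ}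

theorem continuous_splineDeriv (m : ℕ) : Continuous (splineDeriv r s a l m) := by
  unfold splineDeriv; fun_prop

theorem hasDerivAt_splineDeriv {m : ℕ} (hm : m + 2 ≤ r) (t : ℝ) :
    HasDerivAt (splineDeriv r s a l m) (splineDeriv r s a l (m + 1) t) t := by
  obtain ⟨q, hq⟩ : ∃ q, r - m = q + 2 := ⟨r - m - 2, by omega⟩
  have hterm : ∀ j, HasDerivAt (fun t => (-1) ^ j * max (t + a j) 0 ^ (q + 2))
      ((-1) ^ j * (((q + 2 : ℕ) : ℝ) * max (t + a j) 0 ^ (q + 1))) t :=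
    fun j => ((hasDerivAt_max_zero_pow (by omega) (t + a j)).comp_add_const t (a j)).const_mul _
  have hsum := ((HasDerivAt.fun_sum (u := Finset.range s) fun j _ => hterm j).const_mul
    (l / (Nat.factorial (q + 2) : ℝ)))
  have hψ : splineDeriv r s a l m = fun y => l / (Nat.factorial (q + 2) : ℝ) *
      ∑ j ∈ Finset.range s, (-1) ^ j * max (y + a j) 0 ^ (q + 2) := by
    funext y; simp only [splineDeriv, hq]
  rw [hψ]
  refine hsum.congr_deriv ?_
  simp only [splineDeriv, show r - (m + 1) = q + 1 by omega, Finset.mul_sum,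
    Nat.factorial_succ (q + 1)]
  refine Finset.sum_congr rfl fun j _ => ?_
  push_cast
  field_simp
  ring

theorem iteratedDerivWithin_splineFun {m : ℕ} (hm : m < r) :
    EqOn (iteratedDerivWithin m (splineFun r s a l) (Iic 0)) (splineDeriv r s a l m) (Iic 0) := by
  induction m with
  | zero => intro t _; simp [splineFun, splineDeriv]
  | succ m ih =>
    intro t ht
    rw [iteratedDerivWithin_succ, derivWithin_congr (ih (by omega)) (ih (by omega) ht)]
    exact (hasDerivAt_splineDeriv (by omega) t).hasDerivWithinAt.derivWithin
      (uniqueDiffOn_Iic 0 t ht)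

theorem splineDeriv_nonneg (ha : StrictAntiOn a (Iio s)) (hl : 0 ≤ l) (m : ℕ) (t : ℝ) :
    0 ≤ splineDeriv r s a l m t := by
  refine mul_nonneg (by positivity)
    (sum_range_neg_one_pow_mul_mem_Icc (fun j hj => ?_) (fun j => by positivity)).1
  have := ha (mem_Iio.2 (by omega : j < s)) (mem_Iio.2 hj) (lt_add_one j)
  exact pow_le_pow_left₀ (le_max_right _ _) (max_le_max_right _ (by linarith)) _

theorem splineDeriv_eq_zero_of_le (ha : StrictAntiOn a (Iio s)) {m : ℕ} (hm : m < r) {t : ℝ}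
    (ht : t ≤ -a 0) : splineDeriv r s a l m t = 0 := by
  refine mul_eq_zero_of_right _ (Finset.sum_eq_zero fun j hj => ?_)
  have hjs : j < s := Finset.mem_range.1 hj
  have : a j ≤ a 0 := ha.antitoneOn ((Nat.zero_le j).trans_lt hjs) hjs (Nat.zero_le j)
  rw [max_eq_right (by linarith), zero_pow (by omega : r - m ≠ 0), mul_zero]

theorem splineDeriv_pred (hr : 0 < r) (t : ℝ) :
    splineDeriv r s a l (r - 1) t = l * ∑ j ∈ Finset.range s, (-1) ^ j * max (t + a j) 0 := by
  simp [splineDeriv, Nat.sub_sub_self hr]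

theorem splineDeriv_pred_sub_mem_Icc (ha : StrictAntiOn a (Iio s)) (hl : 0 ≤ l) (hr : 0 < r)
    {t₁ t₂ : ℝ} (ht : t₁ ≤ t₂) :
    splineDeriv r s a l (r - 1) t₂ - splineDeriv r s a l (r - 1) t₁ ∈ Icc 0 (l * (t₂ - t₁)) := by
  have hinc := sum_range_neg_one_pow_mul_mem_Icc
    (v := fun j => max (t₂ + a j) 0 - max (t₁ + a j) 0)
    (fun j hj => max_zero_sub_max_zero_le ht
      (ha (mem_Iio.2 (by omega : j < s)) (mem_Iio.2 hj) (lt_add_one j)).le)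
    (fun j => sub_nonneg.2 (max_le_max_right _ (by linarith)))
  simp only [splineDeriv_pred hr, ← mul_sub, ← Finset.sum_sub_distrib]
  exact ⟨mul_nonneg hl hinc.1, mul_le_mul_of_nonneg_left (hinc.2.trans
    ((max_zero_sub_max_zero_le_sub (by linarith)).trans_eq (by ring))) hl⟩

theorem abs_splineDeriv_pred_sub_le (ha : StrictAntiOn a (Iio s)) (hl : 0 ≤ l) (hr : 0 < r)
    (t₁ t₂ : ℝ) :
    |splineDeriv r s a l (r - 1) t₁ - splineDeriv r s a l (r - 1) t₂| ≤ l * |t₁ - t₂| := by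
  wlog h : t₂ ≤ t₁ generalizing t₁ t₂
  · rw [abs_sub_comm, abs_sub_comm t₁]; exact this t₂ t₁ (le_of_not_ge h)
  obtain ⟨h₀, h₁⟩ := splineDeriv_pred_sub_mem_Icc ha hl hr h
  rwa [abs_of_nonneg h₀, abs_of_nonneg (sub_nonneg.2 h)]

theorem monotone_splineDeriv (ha : StrictAntiOn a (Iio s)) (hl : 0 ≤ l) {m : ℕ} (hm : m < r) :
    Monotone (splineDeriv r s a l m) := by
  rcases (show m + 1 ≤ r from hm).lt_or_eq with h | h
  · exact monotone_of_hasDerivAt_nonneg (hasDerivAt_splineDeriv h)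
      (splineDeriv_nonneg ha hl (m + 1))
  · obtain rfl : m = r - 1 := by omega
    exact fun t₁ t₂ ht => sub_nonneg.1 (splineDeriv_pred_sub_mem_Icc ha hl (by omega) ht).1

theorem splineDeriv_pred_sub_of_mem_knot (ha : StrictAntiOn a (Iio s)) (hr : 0 < r) {p : ℕ}
    (hp : p < s) {t₁ t₂ : ℝ} (h₁ : t₁ ∈ Icc (knot s a p) (knot s a (p + 1)))
    (h₂ : t₂ ∈ Icc (knot s a p) (knot s a (p + 1))) :
    splineDeriv r s a l (r - 1) t₂ - splineDeriv r s a l (r - 1) t₁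
      = if Even p then l * (t₂ - t₁) else 0 := by
  have hpiece : ∀ t ∈ Icc (knot s a p) (knot s a (p + 1)),
      ∑ j ∈ Finset.range s, (-1) ^ j * max (t + a j) 0
        = ∑ j ∈ Finset.range (p + 1), (-1) ^ j * (t + a j) := by
    rintro t ⟨hpt, htp⟩
    rw [knot, if_pos hp] at hpt
    rw [← Finset.sum_range_add_sum_Ico _ (show p + 1 ≤ s from hp),
      Finset.sum_eq_zero (s := Finset.Ico (p + 1) s), add_zero]
    · refine Finset.sum_congr rfl fun j hj => ?_
      have hjp : j ≤ p := Nat.lt_succ_iff.1 (Finset.mem_range.1 hj)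
      have := ha.antitoneOn (hjp.trans_lt hp) hp hjp
      rw [max_eq_left (by linarith)]
    · intro j hj
      obtain ⟨hpj, hjs⟩ := Finset.mem_Ico.1 hj
      rw [knot, if_pos (hpj.trans_lt hjs)] at htp
      have := ha.antitoneOn (hpj.trans_lt hjs) hjs hpj
      rw [max_eq_right (by linarith), mul_zero]
  rw [splineDeriv_pred hr, splineDeriv_pred hr, hpiece t₂ h₂, hpiece t₁ h₁, ← mul_sub,
    ← Finset.sum_sub_distrib]
  simp only [← mul_sub, add_sub_add_right_eq_sub, mul_comm _ (t₂ - t₁), ← Finset.mul_sum,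
    neg_one_geom_sum, Nat.even_add_one]
  by_cases hp : Even p <;> simp [hp, mul_comm]

theorem knot_zero_lt_knot_one (ha : StrictAntiOn a (Iio s)) (hapos : ∀ j < s, 0 < a j)
    (hs : 0 < s) : knot s a 0 < knot s a 1 := by
  unfold knot
  split_ifs with h
  · exact neg_lt_neg (ha (mem_Iio.2 hs) (mem_Iio.2 h) zero_lt_one)
  · simpa using hapos 0 hs

theorem knot_nonpos (hapos : ∀ j < s, 0 < a j) (p : ℕ) : knot s a p ≤ 0 := by
  unfold knot
  split_ifs with h
  · exact neg_nonpos.2 (hapos p h).le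
  · rfl

end Spline

section Norm

variable {r m : ℕ} {f : ℝ → ℝ}

theorem nrm_eq_of_monotoneOn (hmr : m ≠ r)
    (hmono : MonotoneOn (iteratedDerivWithin m f (Iic 0)) (Iic 0))
    (hnn : ∀ t ≤ 0, 0 ≤ iteratedDerivWithin m f (Iic 0) t) :
    nrm r m f = iteratedDerivWithin m f (Iic 0) 0 := by
  rw [nrm, if_neg hmr]
  refine IsGreatest.csSup_eq ⟨⟨0, self_mem_Iic, abs_of_nonneg (hnn 0 le_rfl)⟩, ?_⟩
  rintro _ ⟨t, ht, rfl⟩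
  dsimp only
  rw [abs_of_nonneg (hnn t ht)]
  exact hmono ht self_mem_Iic ht

theorem abs_sub_le_nrm_mul
    (hL : ∃ L : NNReal, LipschitzOnWith L (iteratedDerivWithin (r - 1) f (Iic 0)) (Iic 0))
    {t₁ t₂ : ℝ} (h₁ : t₁ ≤ 0) (h₂ : t₂ ≤ 0) :
    |iteratedDerivWithin (r - 1) f (Iic 0) t₁ - iteratedDerivWithin (r - 1) f (Iic 0) t₂|
      ≤ nrm r r f * |t₁ - t₂| := by
  rcases eq_or_ne t₁ t₂ with rfl | hne
  · simp
  have hpos : 0 < |t₁ - t₂| := abs_pos.2 (sub_ne_zero.2 hne)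
  obtain ⟨L, hL⟩ := hL
  rw [← div_le_iff₀ hpos, nrm, if_pos rfl]
  refine le_csInf ⟨L, L.2, by simpa using hL⟩ fun L' ⟨hL'₀, hL'⟩ => ?_
  rw [div_le_iff₀ hpos]
  simpa [Real.dist_eq, Real.coe_toNNReal _ hL'₀] using hL'.dist_le_mul t₁ h₁ t₂ h₂

theorem nrm_self_eq {l : ℝ} (hl : 0 ≤ l)
    (hlip : ∀ t₁ ≤ 0, ∀ t₂ ≤ 0, |iteratedDerivWithin (r - 1) f (Iic 0) t₁ -
      iteratedDerivWithin (r - 1) f (Iic 0) t₂| ≤ l * |t₁ - t₂|)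
    {u v : ℝ} (huv : u < v) (hv : v ≤ 0)
    (hslope : iteratedDerivWithin (r - 1) f (Iic 0) v - iteratedDerivWithin (r - 1) f (Iic 0) u
      = l * (v - u)) :
    nrm r r f = l := by
  rw [nrm, if_pos rfl]
  have hmem : l ∈ {L : ℝ | 0 ≤ L ∧ LipschitzOnWith (Real.toNNReal L)
      (iteratedDerivWithin (r - 1) f (Iic 0)) (Iic 0)} :=
    ⟨hl, LipschitzOnWith.of_dist_le_mul fun t₁ h₁ t₂ h₂ => by
      simpa [Real.dist_eq, Real.coe_toNNReal _ hl] using hlip t₁ h₁ t₂ h₂⟩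
  refine le_antisymm (csInf_le ⟨0, fun L hL => hL.1⟩ hmem) (le_csInf ⟨l, hmem⟩ ?_)
  rintro L ⟨hL₀, hL⟩
  have := hL.dist_le_mul v hv u (huv.le.trans hv)
  rw [Real.dist_eq, Real.dist_eq, hslope, Real.coe_toNNReal _ hL₀, abs_mul, abs_of_nonneg hl,
    abs_of_pos (sub_pos.2 huv)] at this
  exact le_of_mul_le_mul_right this (sub_pos.2 huv)

end Norm

section SplineNorm

variable {r s : ℕ} {a : ℕ → ℝ} {l : ℝ}

theorem nrm_splineFun (ha : StrictAntiOn a (Iio s)) (hl : 0 ≤ l) {m : ℕ} (hm : m < r) :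
    nrm r m (splineFun r s a l) = splineDeriv r s a l m 0 := by
  have hψ := iteratedDerivWithin_splineFun (s := s) (a := a) (l := l) hm
  rw [nrm_eq_of_monotoneOn hm.ne (fun t₁ h₁ t₂ h₂ h => by
      rw [hψ h₁, hψ h₂]; exact monotone_splineDeriv ha hl hm h)
    (fun t ht => hψ ht ▸ splineDeriv_nonneg ha hl m t), hψ self_mem_Iic]

theorem nrm_self_splineFun (ha : StrictAntiOn a (Iio s)) (hapos : ∀ j < s, 0 < a j)
    (hl : 0 ≤ l) (hs : 0 < s) (hr : 0 < r) : nrm r r (splineFun r s a l) = l := by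
  have hψ := iteratedDerivWithin_splineFun (s := s) (a := a) (l := l) (by omega : r - 1 < r)
  have h₀ := knot_zero_lt_knot_one ha hapos hs
  refine nrm_self_eq hl (fun t₁ h₁ t₂ h₂ => ?_) h₀ (knot_nonpos hapos 1) ?_
  · rw [hψ h₁, hψ h₂]
    exact abs_splineDeriv_pred_sub_le ha hl hr t₁ t₂
  · have hv := knot_nonpos hapos 1
    rw [hψ hv, hψ (h₀.le.trans hv), splineDeriv_pred_sub_of_mem_knot ha hr hs
      ⟨le_rfl, h₀.le⟩ ⟨h₀.le, le_rfl⟩, if_pos Even.zero]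

end SplineNorm

section MemLrr

theorem ContDiffOn.hasDerivAt_iteratedDerivWithin_Iic {n m : ℕ} {f : ℝ → ℝ} {c t : ℝ}
    (hf : ContDiffOn ℝ n f (Iic c)) (hm : m < n) (ht : t < c) :
    HasDerivAt (iteratedDerivWithin m f (Iic c)) (iteratedDerivWithin (m + 1) f (Iic c) t) t := by
  rw [iteratedDerivWithin_succ]
  exact ((hf.differentiableOn_iteratedDerivWithin (by exact_mod_cast hm) (uniqueDiffOn_Iic c))
    t ht.le).hasDerivWithinAt.hasDerivAt (Iic_mem_nhds ht)

variable {r m : ℕ} {x : ℝ → ℝ}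

theorem MemLrr.monotoneOn_iteratedDerivWithin (hx : MemLrr r x) (hm : m < r) :
    MonotoneOn (iteratedDerivWithin m x (Iic 0)) (Iic 0) := by
  obtain ⟨hcd, -, -, hnn, hmono⟩ := hx
  rcases (show m + 1 ≤ r from hm).lt_or_eq with h | h
  · refine monotoneOn_of_hasDerivWithinAt_nonneg (f' := iteratedDerivWithin (m + 1) x (Iic 0))
      (convex_Iic 0)
      (hcd.continuousOn_iteratedDerivWithin (by exact_mod_cast (by omega : m ≤ r - 1))
        (uniqueDiffOn_Iic 0)) ?_ ?_
    · simpa using fun t (ht : t < 0) =>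
        (hcd.hasDerivAt_iteratedDerivWithin_Iic (by omega) ht).hasDerivWithinAt
    · simpa using fun t (ht : t < 0) => hnn (m + 1) h t ht.le
  · obtain rfl : m = r - 1 := by omega
    exact hmono

theorem MemLrr.nrm_eq (hx : MemLrr r x) (hm : m < r) :
    nrm r m x = iteratedDerivWithin m x (Iic 0) 0 :=
  nrm_eq_of_monotoneOn hm.ne (hx.monotoneOn_iteratedDerivWithin hm) (hx.2.2.2.1 m hm)

end MemLrr

noncomputable def derivGap (r s : ℕ) (a : ℕ → ℝ) (l : ℝ) (x : ℝ → ℝ) (m : ℕ) (t : ℝ) : ℝ :=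
  iteratedDerivWithin m x (Iic 0) t - splineDeriv r s a l m t

theorem derivChain_derivGap {r s : ℕ} {a : ℕ → ℝ} {l : ℝ} {x : ℝ → ℝ} (hx : MemLrr r x)
    (ha : StrictAntiOn a (Iio s)) (hapos : ∀ j < s, 0 < a j) (hs : 0 < s) (hr : 0 < r)
    (hl : nrm r r x = l) :
    DerivChain (derivGap r s a l x) (r - 1) (knot s a) s where
  continuousOn m hm :=
    (hx.1.continuousOn_iteratedDerivWithin (by exact_mod_cast hm) (uniqueDiffOn_Iic 0)).sub
      (continuous_splineDeriv m).continuousOn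
  hasDerivAt m hm t ht :=
    (hx.1.hasDerivAt_iteratedDerivWithin_Iic (by exact_mod_cast hm) ht).sub
      (hasDerivAt_splineDeriv (by omega) t)
  nonneg_left m hm t ht := by
    rw [knot, if_pos hs] at ht
    rw [derivGap, splineDeriv_eq_zero_of_le ha (by omega) ht, sub_zero]
    exact hx.2.2.2.1 m (by omega) t (ht.trans (neg_nonpos.2 (hapos 0 hs).le))
  knot_last := by simp [knot]
  antitoneOn p hp t₁ h₁ t₂ h₂ h := by
    have hψ := splineDeriv_pred_sub_of_mem_knot (l := l) ha hr hp h₁ h₂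
    have ht₂ : t₂ ≤ 0 := h₂.2.trans (knot_nonpos hapos _)
    have ht₁ : t₁ ≤ 0 := h.trans ht₂
    simp only [derivGap]
    rcases Nat.even_or_odd p with he | ho
    · rw [if_pos he] at hψ
      have hlip := abs_sub_le_nrm_mul hx.2.1 ht₂ ht₁
      rw [hl, abs_of_nonneg (sub_nonneg.2 h)] at hlip
      rw [he.neg_one_pow]
      linarith [le_abs_self (iteratedDerivWithin (r - 1) x (Iic 0) t₂ -
        iteratedDerivWithin (r - 1) x (Iic 0) t₁)]
    · rw [if_neg (Nat.not_even_iff_odd.2 ho)] at hψ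
      rw [ho.neg_one_pow]
      linarith [hx.2.2.2.2 ht₁ ht₂ h]

/-- Lemma 1: if `x ∈ L^{r,r}_{∞,∞}(ℝ₋)` and a spline `φ ∈ Φ_{r,d-2}` have equal
norms `‖x^{(k_i)}‖ = ‖φ^{(k_i)}‖` for `i = 2,…,d` (with `k_d = r`), then
`‖x^{(k_1)}‖ ≥ ‖φ^{(k_1)}‖`, with equality only if `x^{(k_1)} ≡ φ^{(k_1)}` on `ℝ₋`. -/
theorem stmt_9 (r d : ℕ) (k : ℕ → ℕ)
    (hmono : ∀ i j, 1 ≤ i → i < j → j ≤ d → k i < k j)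
    (hkd : k d = r)
    (x φ : ℝ → ℝ) (hx : MemLrr r x) (hφ : IsSpline r (d - 2) φ)
    (heq : ∀ i, 2 ≤ i → i ≤ d → nrm r (k i) x = nrm r (k i) φ) :
    nrm r (k 1) φ ≤ nrm r (k 1) x ∧
    (nrm r (k 1) x = nrm r (k 1) φ →
      Set.EqOn (iteratedDerivWithin (k 1) x (Set.Iic 0))
        (iteratedDerivWithin (k 1) φ (Set.Iic 0)) (Set.Iic 0)) := by
  obtain ⟨s, hs, hsd, a, l, ha, hapos, hl, rfl⟩ := hφ
  have ha' : StrictAntiOn a (Iio s) := fun i hi j hj hij => ha i j hij hj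
  have hk : StrictMonoOn k (Icc 1 d) := fun i hi j hj hij => hmono i j hi.1 hij hj.2
  have hkr : ∀ i, 1 ≤ i → i < d → k i < r := fun i hi hid =>
    hkd ▸ hk ⟨hi, hid.le⟩ ⟨by omega, le_rfl⟩ hid
  have hk₁ : k 1 < k 2 := hk ⟨le_rfl, by omega⟩ ⟨by omega, by omega⟩ one_lt_two
  have hk₂ : k 2 < r := hkr 2 (by omega) (by omega)
  have hr : 0 < r := by omega
  have hF := derivChain_derivGap hx ha' hapos hs hr
    (by simpa [hkd, nrm_self_splineFun ha' hapos hl.le hs hr] using heq d (by omega) le_rfl)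
  have hgap : ∀ m < r, nrm r m x - nrm r m (splineFun r s a l) = derivGap r s a l x m 0 :=
    fun m hm => by rw [hx.nrm_eq hm, nrm_splineFun ha' hl.le hm, derivGap]
  have hnonneg : ∀ m ≤ k 2, ∀ t ≤ 0, 0 ≤ derivGap r s a l x m t := fun m hm t ht =>
    hF.nonneg_of_strictMonoOn (hk.mono (Icc_subset_Icc one_le_two (Nat.sub_le d 1)))
      (by omega) (Nat.le_pred_of_lt (hkr _ (by omega) (by omega)))
      (fun i ⟨hi₂, hid⟩ => by
        rw [← hgap _ (hkr i (by omega) (by omega)), heq i hi₂ (by omega), sub_self])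
      (by omega) hm ht
  refine ⟨by linarith [hgap (k 1) (by omega), hnonneg (k 1) hk₁.le 0 le_rfl], fun h t ht => ?_⟩
  have hmono₁ := hF.monotoneOn (m := k 1) (by omega) fun t ht => hnonneg _ hk₁ t ht.le
  have hzero : derivGap r s a l x (k 1) t = 0 := le_antisymm
    (by simpa [← hgap (k 1) (by omega), h] using hmono₁ ht self_mem_Iic ht)
    (hnonneg _ hk₁.le t ht)
  rw [iteratedDerivWithin_splineFun (by omega) ht]
  exact sub_eq_zero.1 hzero
end

section
/- Let α > β > 0 and M > 0, and let y : [0,∞) → [0,∞) be a function such that y(x)^β − x^β ≥ M for all x ≥ 0. Then y(x)^α − x^α → +∞ as x → +∞. -/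
open Set

/-- Lemma 5: if `α > β > 0`, `M > 0` and `y : [0,∞) → [0,∞)` satisfies
`y(x)^β - x^β ≥ M` for all `x ≥ 0`, then `y(x)^α - x^α → +∞` as `x → +∞`. -/
theorem stmt_13 (α β M : ℝ) (hβ : 0 < β) (hαβ : β < α) (hM : 0 < M)
    (y : ℝ → ℝ) (hy : ∀ x : ℝ, 0 ≤ x → 0 ≤ y x)
    (h : ∀ x : ℝ, 0 ≤ x → M ≤ y x ^ β - x ^ β) :
    Filter.Tendsto (fun x : ℝ => y x ^ α - x ^ α) Filter.atTop Filter.atTop := by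
  set γ := α / β with hγdef
  have hγ1 : 1 < γ := (one_lt_div hβ).mpr hαβ
  have hβγ : β * γ = α := mul_div_cancel₀ α hβ.ne'
  have key : ∀ x : ℝ, 1 ≤ x → γ * M * x ^ (α - β) ≤ y x ^ α - x ^ α := by
    intro x hx
    have hx0 : 0 < x := lt_of_lt_of_le one_pos hx
    have hu : 0 < x ^ β := Real.rpow_pos_of_pos hx0 β
    have h1 : x ^ β + M ≤ y x ^ β := by linarith [h x hx0.le]
    have h2 : (x ^ β + M) ^ γ ≤ y x ^ α := by
      calc (x ^ β + M) ^ γ ≤ (y x ^ β) ^ γ :=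
            Real.rpow_le_rpow (by positivity) h1 (by positivity)
        _ = y x ^ α := by
            rw [← Real.rpow_mul (hy x hx0.le), hβγ]
    have hber : 1 + γ * (M / x ^ β) ≤ (1 + M / x ^ β) ^ γ :=
      one_add_mul_self_le_rpow_one_add (le_trans (by norm_num) (by positivity : (0:ℝ) ≤ M / x ^ β)) hγ1.le
    have h3 : (x ^ β) ^ γ + γ * M * (x ^ β) ^ (γ - 1) ≤ (x ^ β + M) ^ γ := by
      have : (x ^ β + M) ^ γ = (x ^ β) ^ γ * (1 + M / x ^ β) ^ γ := by
        rw [← Real.mul_rpow hu.le (by positivity)]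
        rw [mul_add, mul_one, mul_div_cancel₀ _ hu.ne']
      rw [this]
      have := mul_le_mul_of_nonneg_left hber (le_of_lt (Real.rpow_pos_of_pos hu γ))
      calc (x ^ β) ^ γ + γ * M * (x ^ β) ^ (γ - 1)
          = (x ^ β) ^ γ * (1 + γ * (M / x ^ β)) := by
            rw [Real.rpow_sub hu, Real.rpow_one]
            field_simp
        _ ≤ (x ^ β) ^ γ * (1 + M / x ^ β) ^ γ := this
    have h4 : (x ^ β) ^ γ = x ^ α := by rw [← Real.rpow_mul hx0.le, hβγ]
    have h5 : (x ^ β) ^ (γ - 1) = x ^ (α - β) := by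
      rw [← Real.rpow_mul hx0.le]
      congr 1
      rw [mul_sub, hβγ, mul_one]
    rw [h4, h5] at h3
    linarith
  have hlim : Filter.Tendsto (fun x : ℝ => γ * M * x ^ (α - β))
      Filter.atTop Filter.atTop := by
    apply Filter.Tendsto.const_mul_atTop (by positivity)
    exact tendsto_rpow_atTop (by linarith)
  exact Filter.tendsto_atTop_mono' _
    (Filter.eventually_atTop.mpr ⟨1, key⟩) hlim
end
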